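/- arXiv:1502.00949 — 4 statements merged into one kernel-verified Lean document; each statement's English description precedes it below -/
import Mathlib

section
/- Let q be a prime power, F_q the field with q elements, and A = F_q[θ]. For integers s ≥ 0 and k ≥ 1 with s < k(q-1), the power sum S_k(t_1,…,t_s) = ∑_{a monic in A of degree k} a(t_1)⋯a(t_s) is identically zero as a polynomial in F_q[θ][t_1,…,t_s]. -/
/-!
Treat the lower coefficients `c j` of the monic polynomial as indeterminates: the summand is the
evaluation at `c` of `∏ i, (t_i ^ k + ∑ j, c_j t_i ^ j)`, a polynomial in the `c_j` of total degree
at most `s` with coefficients in `F[t_1, …, t_s]`. Summing a monomial of degree `< k (q - 1)` in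
`k` variables over all of `F^k` gives zero, since one of its exponents is `< q - 1`
(the Chevalley–Warning lemma).
-/

open Finset MvPolynomial

theorem MvPolynomial.sum_eval_algebraMap_eq_zero {K R σ : Type*} [Field K] [Fintype K]
    [CommSemiring R] [Algebra K R] [Fintype σ] [DecidableEq σ] (f : MvPolynomial σ R)
    (h : f.totalDegree < (Fintype.card K - 1) * Fintype.card σ) :
    ∑ x : σ → K, eval (algebraMap K R ∘ x) f = 0 := by
  have monomial_sum_eq_zero : ∀ d ∈ f.support,
      ∑ x : σ → K, eval (algebraMap K R ∘ x) (monomial d (f.coeff d)) = 0 := by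
    intro d hd
    have hdeg : (monomial d (1 : K)).totalDegree < (Fintype.card K - 1) * Fintype.card σ :=
      (totalDegree_monomial_le _ _).trans_lt ((le_totalDegree hd).trans_lt h)
    calc ∑ x : σ → K, eval (algebraMap K R ∘ x) (monomial d (f.coeff d))
        = f.coeff d * algebraMap K R (∑ x : σ → K, eval x (monomial d 1)) := by
          simp [eval_monomial, mul_sum, Finsupp.prod, map_prod]
      _ = 0 := by rw [sum_eval_eq_zero _ hdeg, map_zero, mul_zero]
  conv_lhs => enter [2, x]; rw [f.as_sum, map_sum]
  rw [sum_comm]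
  exact sum_eq_zero monomial_sum_eq_zero

section GenericMonic

variable {R : Type*} [CommSemiring R]

noncomputable def genericMonicAt (k : ℕ) (x : R) : MvPolynomial (Fin k) R :=
  C (x ^ k) + ∑ j : Fin k, X j * C (x ^ (j : ℕ))

theorem eval_genericMonicAt {K : Type*} [CommSemiring K] [Algebra K R] (k : ℕ) (x : R)
    (c : Fin k → K) :
    eval (algebraMap K R ∘ c) (genericMonicAt k x) =
      Polynomial.aeval x
        (Polynomial.X ^ k + ∑ j : Fin k, Polynomial.C (c j) * Polynomial.X ^ (j : ℕ)) := by
  simp only [genericMonicAt, map_add, map_sum, map_mul, map_pow, eval_C, eval_X,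
    Function.comp_apply, Polynomial.aeval_X, Polynomial.aeval_C]

theorem totalDegree_genericMonicAt_le (k : ℕ) (x : R) :
    (genericMonicAt k x).totalDegree ≤ 1 := by
  refine (totalDegree_add _ _).trans (max_le (by rw [totalDegree_C]; exact zero_le_one) ?_)
  refine totalDegree_finsetSum_le fun j _ => (totalDegree_mul _ _).trans ?_
  rw [totalDegree_C, add_zero]
  exact (totalDegree_monomial_le _ _).trans (by simp)

end GenericMonic

theorem stmt0_general (F : Type*) [Field F] [Fintype F] (s k : ℕ)
    (h : s < k * (Fintype.card F - 1)) :
    ∑ c : Fin k → F, ∏ i : Fin s,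
      Polynomial.aeval (MvPolynomial.X i)
        ((Polynomial.X : Polynomial F) ^ k +
          ∑ j : Fin k, Polynomial.C (c j) * Polynomial.X ^ (j : ℕ))
      = (0 : MvPolynomial (Fin s) F) := by
  have hdeg : (∏ i : Fin s, genericMonicAt k (X i : MvPolynomial (Fin s) F)).totalDegree
      < (Fintype.card F - 1) * Fintype.card (Fin k) :=
    calc _ ≤ ∑ i : Fin s, (genericMonicAt k (X i : MvPolynomial (Fin s) F)).totalDegree :=
          totalDegree_finsetProd _ _
      _ ≤ ∑ _i : Fin s, 1 := sum_le_sum fun i _ => totalDegree_genericMonicAt_le k _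
      _ < (Fintype.card F - 1) * Fintype.card (Fin k) := by simpa [mul_comm] using h
  rw [← sum_eval_algebraMap_eq_zero _ hdeg]
  simp only [map_prod, eval_genericMonicAt]

/-- Carlitz's vanishing theorem: for `s < k(q-1)`, the power sum
`S_k(t_1,…,t_s) = ∑_{a monic of degree k} a(t_1)⋯a(t_s)` vanishes.
Monic polynomials of degree `k` are parameterized by their lower-order
coefficients `c : Fin k → F`. -/
theorem stmt0 (F : Type*) [Field F] [Fintype F] (s k : ℕ) (hk : 1 ≤ k)
    (h : s < k * (Fintype.card F - 1)) :
    ∑ c : Fin k → F, ∏ i : Fin s,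
      Polynomial.aeval (MvPolynomial.X i)
        ((Polynomial.X : Polynomial F) ^ k +
          ∑ j : Fin k, Polynomial.C (c j) * Polynomial.X ^ (j : ℕ))
      = (0 : MvPolynomial (Fin s) F) :=
  stmt0_general F s k h
end

section
/- Let P be a monic irreducible polynomial of degree d in A = F_q[θ], and v_P the P-adic valuation with v_P(P) = 1. Define D_0 = 1 and D_i = (θ^{q^i} − θ) D_{i−1}^q for i ≥ 1. Then for all i ≥ 0, v_P(D_i) = (q^i − q^{i − ⌊i/d⌋·d})/(q^d − 1). -/
/-!
For `k < i` the Frobenius gives `X^{q^i} - X^{q^k} = (X^{q^{i-k}} - X)^{q^k}`, and `X^{q^m} - X`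
is separable and divisible by an irreducible `P` exactly when `deg P ∣ m`. So `v_P(D_i)` is the
sum of the `q^k` over `k < i` with `d ∣ i - k`, a geometric series in `q^d` with value
`(q^i - q^{i mod d}) / (q^d - 1)`.
-/

open Polynomial Finset

theorem sum_range_ite_dvd_sub_mul {R : Type*} [CommRing R] (x : R) (d n : ℕ) :
    (∑ k ∈ range n, if d ∣ n - k then x ^ k else 0) * (x ^ d - 1) = x ^ n - x ^ (n % d) := by
  rcases Nat.eq_zero_or_pos d with rfl | hd
  · simp
  induction n using Nat.strong_induction_on with
  | _ n ih =>
  rcases lt_or_ge n d with hnd | hdn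
  · rw [Nat.mod_eq_of_lt hnd, sub_self, sum_eq_zero fun k hk => if_neg fun h => ?_, zero_mul]
    have := Nat.le_of_dvd (by grind) h
    grind
  · obtain ⟨m, rfl⟩ := Nat.exists_eq_add_of_le' hdn
    have hlast : ∑ k ∈ range d, (if d ∣ m + d - (m + k) then x ^ (m + k) else 0) = x ^ m := by
      rw [sum_eq_single_of_mem 0 (mem_range.2 hd) fun k hk hk0 => if_neg fun h => ?_]
      · simp
      · have := Nat.le_of_dvd (by grind) h
        grind
    have hfirst : ∑ k ∈ range m, (if d ∣ m + d - k then x ^ k else 0) =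
        ∑ k ∈ range m, (if d ∣ m - k then x ^ k else 0) :=
      sum_congr rfl fun k hk => by
        simp only [show m + d - k = m - k + d by grind, Nat.dvd_add_self_right]
    rw [sum_range_add, hfirst, hlast, add_mul, ih m (by omega), Nat.add_mod_right]
    ring

theorem sum_range_ite_dvd_sub_eq_div {q : ℕ} (hq : 2 ≤ q) {d : ℕ} (hd : 0 < d) (n : ℕ) :
    ∑ k ∈ range n, (if d ∣ n - k then q ^ k else 0) = (q ^ n - q ^ (n % d)) / (q ^ d - 1) := by
  have hqd : 1 < q ^ d := Nat.one_lt_pow hd.ne' hq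
  have hle : q ^ (n % d) ≤ q ^ n := Nat.pow_le_pow_right (by omega) (Nat.mod_le n d)
  refine (Nat.div_eq_of_eq_mul_left (by omega) ?_).symm
  zify [hqd.le, hle]
  simp only [Int.natCast_dvd_natCast]
  exact (sum_range_ite_dvd_sub_mul (q : ℤ) d n).symm

namespace FiniteField

variable {K : Type*} [Field K] [Fintype K]

theorem expand_card_pow (f : K[X]) (k : ℕ) :
    expand K (Fintype.card K ^ k) f = f ^ Fintype.card K ^ k := by
  induction k with
  | zero => simp
  | succ k ih => rw [pow_succ, expand_mul, expand_card, map_pow, ih, ← pow_mul]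

theorem X_pow_card_pow_sub_X_pow_card_pow {i k : ℕ} (hki : k ≤ i) :
    (X : K[X]) ^ Fintype.card K ^ i - X ^ Fintype.card K ^ k =
      (X ^ Fintype.card K ^ (i - k) - X) ^ Fintype.card K ^ k := by
  rw [← expand_card_pow (X ^ Fintype.card K ^ (i - k) - X) k, map_sub, map_pow, expand_X,
    ← pow_mul, ← pow_add, Nat.add_sub_cancel' hki]

theorem emultiplicity_X_pow_card_pow_sub_X {P : K[X]} (hP : Irreducible P) {m : ℕ}
    (hm : m ≠ 0) :
    emultiplicity P (X ^ Fintype.card K ^ m - X) = if P.natDegree ∣ m then 1 else 0 := by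
  have hdvd_iff : P ∣ X ^ Fintype.card K ^ m - X ↔ P.natDegree ∣ m := by
    rw [hP.natDegree_dvd_iff_dvd_X_pow_card_pow_sub_X, Nat.card_eq_fintype_card]
  have hsqfree : Squarefree (X ^ Fintype.card K ^ m - X : K[X]) := by
    obtain ⟨p, _⟩ := CharP.exists K
    refine (galois_poly_separable p _ ((CharP.cast_eq_zero_iff K p _).1 ?_)).squarefree
    rw [Nat.cast_pow, cast_card_eq_zero, zero_pow hm]
  split_ifs with hd
  · refine le_antisymm ?_ (Order.one_le_iff_pos.2 (emultiplicity_pos_of_dvd (hdvd_iff.2 hd)))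
    exact ((squarefree_iff_emultiplicity_le_one _).1 hsqfree P).resolve_right hP.not_isUnit
  · exact emultiplicity_eq_zero.2 (mt hdvd_iff.1 hd)

end FiniteField

namespace Polynomial

variable (K : Type*) [Field K] [Fintype K]

noncomputable def carlitzFactorial (i : ℕ) : K[X] :=
  ∏ k ∈ range i, (X ^ Fintype.card K ^ i - X ^ Fintype.card K ^ k)

variable {K}

theorem emultiplicity_carlitzFactorial {P : K[X]} (hP : Irreducible P) (i : ℕ) :
    emultiplicity P (carlitzFactorial K i) =
      ((∑ k ∈ range i, if P.natDegree ∣ i - k then Fintype.card K ^ k else 0 : ℕ) : ℕ∞) := by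
  rw [carlitzFactorial, Finset.emultiplicity_prod hP.prime, Nat.cast_sum]
  refine sum_congr rfl fun k hk => ?_
  have hki := mem_range.1 hk
  rw [FiniteField.X_pow_card_pow_sub_X_pow_card_pow hki.le, emultiplicity_pow hP.prime,
    FiniteField.emultiplicity_X_pow_card_pow_sub_X hP (by omega)]
  split_ifs <;> simp

end Polynomial

theorem stmt2_general (F : Type*) [Field F] [Fintype F] (q : ℕ) (hq : q = Fintype.card F)
    (P : Polynomial F) (hPirr : Irreducible P)
    (d : ℕ) (hd : d = P.natDegree) (i : ℕ) :
    P ^ ((q ^ i - q ^ (i - i / d * d)) / (q ^ d - 1)) ∣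
      ∏ k ∈ Finset.range i,
        ((Polynomial.X : Polynomial F) ^ q ^ i - Polynomial.X ^ q ^ k) ∧
    ¬ P ^ ((q ^ i - q ^ (i - i / d * d)) / (q ^ d - 1) + 1) ∣
      ∏ k ∈ Finset.range i,
        ((Polynomial.X : Polynomial F) ^ q ^ i - Polynomial.X ^ q ^ k) := by
  subst hq hd
  have key := emultiplicity_carlitzFactorial hPirr i
  rw [sum_range_ite_dvd_sub_eq_div Fintype.one_lt_card hPirr.natDegree_pos,
    Nat.mod_eq_sub_div_mul] at key
  exact emultiplicity_eq_coe.1 key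

/-- For a prime `P` of `A = F_q[θ]` of degree `d`, the `P`-adic valuation of the
Carlitz factorial `D_i = ∏_{k=0}^{i−1} (θ^{q^i} − θ^{q^k})` equals
`(q^i − q^{i − ⌊i/d⌋·d})/(q^d − 1)`. -/
theorem stmt2 (F : Type*) [Field F] [Fintype F] (q : ℕ) (hq : q = Fintype.card F)
    (P : Polynomial F) (hPirr : Irreducible P) (hPmon : P.Monic)
    (d : ℕ) (hd : d = P.natDegree) (i : ℕ) :
    P ^ ((q ^ i - q ^ (i - i / d * d)) / (q ^ d - 1)) ∣
      ∏ k ∈ Finset.range i,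
        ((Polynomial.X : Polynomial F) ^ q ^ i - Polynomial.X ^ q ^ k) ∧
    ¬ P ^ ((q ^ i - q ^ (i - i / d * d)) / (q ^ d - 1) + 1) ∣
      ∏ k ∈ Finset.range i,
        ((Polynomial.X : Polynomial F) ^ q ^ i - Polynomial.X ^ q ^ k) :=
  stmt2_general F q hq P hPirr d hd i
end

section
/- In the power series ring K[[t]] with K = F_q(θ), let log_{C,z} = ∑_{k≥0} (z^k/ℓ_k) τ^k and log^{(1)}_{C,z} = ∑_{k≥0} (k z^{k−1}/ℓ_k) τ^k be twisted power series in the variable τ over K[z], where τ z = z τ and τ a = a^q τ for a ∈ K. Then one has the identity log^{(1)}_{C,z}·(zτ + θ) − θ·log^{(1)}_{C,z} = −log_{C,z}·τ. -/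
/-! Since `ℓ_m = ℓ_{m-1} (θ - θ^{q^m})` and this factor is nonzero, the two terms with
denominator `ℓ_m` combine to `-m/ℓ_{m-1}`, leaving `((m-1) - m)/ℓ_{m-1} = -1/ℓ_{m-1}`. -/

theorem RatFunc.X_sub_X_pow_ne_zero {F : Type*} [Field F] {n : ℕ} (hn : n ≠ 1) :
    (RatFunc.X : RatFunc F) - RatFunc.X ^ n ≠ 0 := by
  rw [sub_ne_zero]
  intro h
  have hpoly : (Polynomial.X : Polynomial F) = Polynomial.X ^ n :=
    RatFunc.algebraMap_injective F (by simpa [RatFunc.algebraMap_X] using h)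
  have := congrArg Polynomial.natDegree hpoly
  simp only [Polynomial.natDegree_X, Polynomial.natDegree_X_pow] at this
  exact hn this.symm

theorem div_add_mul_div_sub_mul_div_eq_neg_inv {K : Type*} [Field K] (a : K) {ℓ x y : K}
    (hℓ : ℓ ≠ 0) (hxy : x - y ≠ 0) :
    a / ℓ + (a + 1) * y / (ℓ * (x - y)) - (a + 1) * x / (ℓ * (x - y)) = -ℓ⁻¹ := by
  field_simp
  ring

/-- The identity `log^{(1)}_{C,z}·(zτ + θ) − θ·log^{(1)}_{C,z} = −log_{C,z}·τ` in the
twisted power series ring over `K[z]` (`τ x = x^q τ` for `x ∈ K = F_q(θ)`, `τ z = z τ`),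
stated coefficientwise: for every `m ≥ 1`, the coefficient of `τ^m` (an element of
`K[z]`, with `z = Polynomial.X` and `θ = RatFunc.X`) of the left side, namely
`(m−1) z^{m−1}/ℓ_{m−1} + m z^{m−1} θ^{q^m}/ℓ_m − m z^{m−1} θ/ℓ_m`,
equals that of the right side, `−z^{m−1}/ℓ_{m−1}`; the coefficient of `τ^0` of both
sides is `0`. Here `ℓ_i = ∏_{k=1}^{i}(θ − θ^{q^k})`. -/
theorem stmt8 (F : Type*) [Field F] [Fintype F] (q : ℕ) (hq : q = Fintype.card F)
    (ℓ : ℕ → RatFunc F)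
    (hℓ : ∀ i, ℓ i = ∏ k ∈ Finset.Icc 1 i, (RatFunc.X - RatFunc.X ^ q ^ k)) :
    ∀ m : ℕ, 1 ≤ m →
      Polynomial.C (((m - 1 : ℕ) : RatFunc F) / ℓ (m - 1)) * Polynomial.X ^ (m - 1)
        + Polynomial.C ((m : RatFunc F) * RatFunc.X ^ q ^ m / ℓ m) * Polynomial.X ^ (m - 1)
        - Polynomial.C ((m : RatFunc F) * RatFunc.X / ℓ m) * Polynomial.X ^ (m - 1)
      = -(Polynomial.C ((ℓ (m - 1))⁻¹) * Polynomial.X ^ (m - 1)) := by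
  have hfactor : ∀ k, 1 ≤ k → (RatFunc.X : RatFunc F) - RatFunc.X ^ q ^ k ≠ 0 := fun k hk =>
    RatFunc.X_sub_X_pow_ne_zero (Nat.one_lt_pow (by omega) (hq ▸ Fintype.one_lt_card)).ne'
  have hℓ_ne_zero : ∀ i, ℓ i ≠ 0 := fun i => by
    rw [hℓ]
    exact Finset.prod_ne_zero_iff.mpr fun k hk => hfactor k (Finset.mem_Icc.mp hk).1
  rintro m hm
  obtain ⟨n, rfl⟩ : ∃ n, m = n + 1 := ⟨m - 1, by omega⟩
  have hℓ_succ : ℓ (n + 1) = ℓ n * (RatFunc.X - RatFunc.X ^ q ^ (n + 1)) := by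
    rw [hℓ, hℓ, Finset.prod_Icc_succ_top (by omega)]
  have hcoeff := div_add_mul_div_sub_mul_div_eq_neg_inv (n : RatFunc F) (hℓ_ne_zero n)
    (hfactor (n + 1) (by omega))
  rw [← hℓ_succ] at hcoeff
  simp only [Nat.add_sub_cancel, Nat.cast_succ]
  rw [← add_mul, ← sub_mul, ← Polynomial.C_add, ← Polynomial.C_sub, hcoeff, Polynomial.C_neg,
    neg_mul]
end

section
/- Let a ∈ F_q[T][t_1,…,t_n] be monic as a polynomial in T, where v(T) = −1 in C_F. Then there exists a rational r < 0 such that 1/a lies in T_{n,r}, i.e. 1/a = ∑_i c_i t^i with v(c_i) + r|i| → ∞; concretely, writing a = T^k + b with v(b) > −k and b of total degree ≤ dg in the t-variables, any r with −1/dg < r < 0 works, via the geometric series 1/a = ∑_{m≥0} (−1)^m b^m / T^{k(m+1)}. -/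
/-!
Viewed as a power series, `a` has constant coefficient `c = T ^ k + b₀`, of norm `‖T‖ ^ k` by the
ultrametric inequality, and since `b` has only finitely many coefficients, all of norm
`< ‖T‖ ^ k`, there is `ρ < 1` with `‖b_m‖ ≤ ‖c‖ ρ ^ |m|`. For `g = a⁻¹` the recursion
`c g_m = -∑_{p + q = m, p ≠ 0} a_p g_q` and the ultrametric inequality give
`‖c‖ ‖g_m‖ ≤ ρ ^ |m|` by induction on `m`, so `‖g_m‖ B ^ |m| → 0` for every `1 < B < 1 / ρ`.
-/

open Filter Finset

namespace MvPolynomial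

variable {σ R : Type*} [SeminormedCommRing R]

theorem exists_norm_coeff_le_of_forall_lt (p : MvPolynomial σ R) {C : ℝ}
    (hp : ∀ m, ‖coeff m p‖ < C) : ∃ M, 0 ≤ M ∧ M < C ∧ ∀ m, ‖coeff m p‖ ≤ M := by
  classical
  set M := (insert 0 p.support).sup' (insert_nonempty _ _) fun m => ‖coeff m p‖
  have hM0 : 0 ≤ M :=
    (norm_nonneg _).trans (le_sup' (fun m => ‖coeff m p‖) (mem_insert_self _ _))
  refine ⟨M, hM0, (sup'_lt_iff _).2 fun m _ => hp m, fun m => ?_⟩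
  by_cases hm : m ∈ p.support
  · exact le_sup' (fun m => ‖coeff m p‖) (mem_insert_of_mem hm)
  · rwa [notMem_support_iff.1 hm, norm_zero]

theorem exists_norm_coeff_le_mul_pow_degree (p : MvPolynomial σ R) {C : ℝ}
    (hp : ∀ m, ‖coeff m p‖ < C) :
    ∃ ρ, 0 ≤ ρ ∧ ρ < 1 ∧ ∀ m, ‖coeff m p‖ ≤ C * ρ ^ m.degree := by
  obtain ⟨M, hM0, hMC, hM⟩ := p.exists_norm_coeff_le_of_forall_lt hp
  have hC : 0 < C := hM0.trans_lt hMC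
  set D := p.totalDegree + 1
  set ρ := (M / C) ^ (D : ℝ)⁻¹
  have hρ0 : 0 ≤ ρ := by positivity
  have hρ1 : ρ < 1 := Real.rpow_lt_one (by positivity) ((div_lt_one hC).2 hMC) (by positivity)
  have hρD : ρ ^ D = M / C := by
    rw [← Real.rpow_natCast, ← Real.rpow_mul (by positivity), inv_mul_cancel₀ (by positivity),
      Real.rpow_one]
  refine ⟨ρ, hρ0, hρ1, fun m => ?_⟩
  by_cases hm : m ∈ p.support
  · have hmD : m.degree ≤ D := (le_totalDegree hm).trans (Nat.le_succ _)
    calc ‖coeff m p‖ ≤ M := hM m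
      _ = C * ρ ^ D := by rw [hρD, mul_div_cancel₀ _ hC.ne']
      _ ≤ C * ρ ^ m.degree := mul_le_mul_of_nonneg_left (pow_le_pow_of_le_one hρ0 hρ1.le hmD) hC.le
  · rw [notMem_support_iff.1 hm, norm_zero]
    positivity

end MvPolynomial

namespace MvPowerSeries

variable {σ K : Type*} [NormedField K] [IsUltrametricDist K]

theorem norm_constantCoeff_mul_norm_coeff_inv_le (φ : MvPowerSeries σ K) {ρ : ℝ} (hρ : 0 ≤ ρ)
    (hφ : ∀ m ≠ 0, ‖coeff m φ‖ ≤ ‖constantCoeff φ‖ * ρ ^ m.degree) (m : σ →₀ ℕ) :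
    ‖constantCoeff φ‖ * ‖coeff m φ⁻¹‖ ≤ ρ ^ m.degree := by
  classical
  set c := constantCoeff φ
  by_cases hc : c = 0
  · rw [hc, norm_zero, zero_mul]
    positivity
  induction m using WellFoundedLT.induction with
  | ind m IH =>
  rw [coeff_inv]
  split_ifs with hm
  · rw [hm, ← norm_mul, mul_inv_cancel₀ hc, norm_one, map_zero, pow_zero]
  rw [← norm_mul, ← mul_assoc, mul_neg, mul_inv_cancel₀ hc, neg_one_mul, norm_neg]
  refine IsUltrametricDist.norm_sum_le_of_forall_le_of_nonneg (by positivity) fun x hx => ?_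
  split_ifs with hlt
  · have hx1 : x.1 ≠ 0 := by
      rintro h
      rw [HasAntidiagonal.mem_antidiagonal, h, zero_add] at hx
      exact hlt.ne hx
    have hdeg : m.degree = x.1.degree + x.2.degree := by
      rw [← map_add, HasAntidiagonal.mem_antidiagonal.1 hx]
    calc ‖coeff x.1 φ * coeff x.2 φ⁻¹‖ = ‖coeff x.1 φ‖ * ‖coeff x.2 φ⁻¹‖ := norm_mul _ _
      _ ≤ ‖c‖ * ρ ^ x.1.degree * ‖coeff x.2 φ⁻¹‖ := by gcongr; exact hφ _ hx1
      _ = ρ ^ x.1.degree * (‖c‖ * ‖coeff x.2 φ⁻¹‖) := by ring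
      _ ≤ ρ ^ x.1.degree * ρ ^ x.2.degree := by gcongr; exact IH _ hlt
      _ = ρ ^ m.degree := by rw [hdeg, pow_add]
  · rw [norm_zero]
    positivity

end MvPowerSeries

theorem Finsupp.tendsto_degree_cofinite_atTop {σ : Type*} [Finite σ] :
    Tendsto (fun m : σ →₀ ℕ => m.degree) cofinite atTop := by
  refine tendsto_atTop.2 fun N => eventually_cofinite.2 ?_
  simpa only [not_le] using Finsupp.finite_of_degree_lt N

theorem tendsto_norm_mul_pow_degree_cofinite {σ E : Type*} [Finite σ] [SeminormedAddGroup E]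
    {f : (σ →₀ ℕ) → E} {c ρ B : ℝ} (hc : 0 < c) (hρ : 0 ≤ ρ) (hB : 0 ≤ B) (hρB : ρ * B < 1)
    (hf : ∀ m, c * ‖f m‖ ≤ ρ ^ m.degree) :
    Tendsto (fun m => ‖f m‖ * B ^ m.degree) cofinite (nhds 0) := by
  have hgeom : Tendsto (fun m : σ →₀ ℕ => (ρ * B) ^ m.degree / c) cofinite (nhds 0) := by
    have h := ((tendsto_pow_atTop_nhds_zero_of_lt_one (by positivity) hρB).div_const c).comp
      (Finsupp.tendsto_degree_cofinite_atTop (σ := σ))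
    rwa [zero_div] at h
  refine squeeze_zero (fun m => by positivity) (fun m => ?_) hgeom
  rw [mul_pow, le_div_iff₀ hc]
  calc ‖f m‖ * B ^ m.degree * c = c * ‖f m‖ * B ^ m.degree := by ring
    _ ≤ ρ ^ m.degree * B ^ m.degree := by gcongr; exact hf m

theorem stmt15_general (C_F : Type*) [NontriviallyNormedField C_F] [IsUltrametricDist C_F]
    (n : ℕ) (T : C_F)
    (k : ℕ)
    (b : MvPolynomial (Fin n) C_F)
    (hb : ∀ m : Fin n →₀ ℕ, ‖MvPolynomial.coeff m b‖ < ‖T‖ ^ k)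
    (a : MvPolynomial (Fin n) C_F) (ha : a = MvPolynomial.C (T ^ k) + b) :
    ∃ B : ℝ, 1 < B ∧ ∃ g : MvPowerSeries (Fin n) C_F,
      (↑a : MvPowerSeries (Fin n) C_F) * g = 1 ∧
      Filter.Tendsto (fun m : Fin n →₀ ℕ => ‖MvPowerSeries.coeff m g‖ * B ^ (∑ j, m j))
        Filter.cofinite (nhds 0) := by
  obtain ⟨ρ, hρ0, hρ1, hbρ⟩ := b.exists_norm_coeff_le_mul_pow_degree hb
  set φ : MvPowerSeries (Fin n) C_F := ↑a
  have hφ0 : ‖MvPowerSeries.constantCoeff φ‖ = ‖T‖ ^ k := by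
    rw [← MvPowerSeries.coeff_zero_eq_constantCoeff_apply, MvPolynomial.coeff_coe, ha,
      MvPolynomial.coeff_add, MvPolynomial.coeff_C, if_pos rfl,
      IsUltrametricDist.norm_add_eq_max_of_norm_ne_norm (by rw [norm_pow]; exact (hb 0).ne'),
      norm_pow, max_eq_left (hb 0).le]
  have hc : 0 < ‖MvPowerSeries.constantCoeff φ‖ := hφ0 ▸ (norm_nonneg _).trans_lt (hb 0)
  have hφ : ∀ m ≠ 0,
      ‖MvPowerSeries.coeff m φ‖ ≤ ‖MvPowerSeries.constantCoeff φ‖ * ρ ^ m.degree := by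
    intro m hm
    rw [MvPolynomial.coeff_coe, ha, MvPolynomial.coeff_add, MvPolynomial.coeff_C,
      if_neg (Ne.symm hm), zero_add, hφ0]
    exact hbρ m
  refine ⟨2 / (1 + ρ), by rw [lt_div_iff₀ (by positivity)]; linarith, φ⁻¹,
    φ.mul_inv_cancel (norm_pos_iff.1 hc), ?_⟩
  simp only [← Finsupp.degree_eq_sum]
  refine tendsto_norm_mul_pow_degree_cofinite hc hρ0 (by positivity) ?_
    (φ.norm_constantCoeff_mul_norm_coeff_inv_le hρ0 hφ)
  rw [mul_div_assoc', div_lt_one (by positivity)]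
  linarith

/-- If `a = T^k + b` is a polynomial in `t_1,…,t_n` over `C_F` which is monic in `T`
(`‖T‖ > 1` encodes `v(T) = −1`, and `‖b‖ < ‖T‖^k` encodes `v(b) > −k`, the Gauss
valuation being the max of coefficient norms), then `1/a` lies in `T_{n,r}` for some
`r < 0`: there are `B > 1` (`B = e^{−r}`) and a power series inverse `g` of `a` with
`‖coeff_m g‖·B^{|m|} → 0`. -/
theorem stmt15 (C_F : Type*) [NontriviallyNormedField C_F] [IsUltrametricDist C_F]
    (n : ℕ) (T : C_F) (hT : 1 < ‖T‖)
    (k : ℕ) (hk : 1 ≤ k)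
    (b : MvPolynomial (Fin n) C_F)
    (hb : ∀ m : Fin n →₀ ℕ, ‖MvPolynomial.coeff m b‖ < ‖T‖ ^ k)
    (a : MvPolynomial (Fin n) C_F) (ha : a = MvPolynomial.C (T ^ k) + b) :
    ∃ B : ℝ, 1 < B ∧ ∃ g : MvPowerSeries (Fin n) C_F,
      (↑a : MvPowerSeries (Fin n) C_F) * g = 1 ∧
      Filter.Tendsto (fun m : Fin n →₀ ℕ => ‖MvPowerSeries.coeff m g‖ * B ^ (∑ j, m j))
        Filter.cofinite (nhds 0) :=
  stmt15_general C_F n T k b hb a ha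
end
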